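/- The number of superfluous meshes for the identity permutation 123 ∈ S_3 is 405. -/

import Mathlib

/-- `σ` contains the classical pattern `π`. -/
def PatternContains {k n : ℕ} (π : Equiv.Perm (Fin k)) (σ : Equiv.Perm (Fin n)) : Prop :=
  ∃ f : Fin k → Fin n, StrictMono f ∧ ∀ a b : Fin k, σ (f a) < σ (f b) ↔ π a < π b

/-- `σ` contains the mesh pattern `(π, R)`: some occurrence of `π` in `σ` leaves all
regions corresponding to squares of `R` free of points of `G(σ)`.  Squares are indexed
by lower-left corner `(p.1, p.2) ∈ [0,k] × [0,k]`, with the usual boundary conventions. -/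
def MeshContains {k n : ℕ} (π : Equiv.Perm (Fin k))
    (R : Set (Fin (k + 1) × Fin (k + 1))) (σ : Equiv.Perm (Fin n)) : Prop :=
  ∃ f : Fin k → Fin n, StrictMono f ∧ (∀ a b : Fin k, σ (f a) < σ (f b) ↔ π a < π b) ∧
    ∀ p ∈ R, ¬ ∃ z : Fin n,
      (∀ c : Fin k, c.val < p.1.val → f c < z) ∧
      (∀ c : Fin k, p.1.val ≤ c.val → z < f c) ∧
      (∀ c : Fin k, (π c).val < p.2.val → σ (f c) < σ z) ∧
      (∀ c : Fin k, p.2.val ≤ (π c).val → σ z < σ (f c))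

/-- `(a, b)` is a point of `G(π)` (1-indexed: `π(a) = b`). -/
def HasPoint {k : ℕ} (π : Equiv.Perm (Fin k)) (a b : ℤ) : Prop :=
  ∃ c : Fin k, (c.val : ℤ) + 1 = a ∧ ((π c).val : ℤ) + 1 = b

/-- The square with lower-left corner `(a, b)` is a shaded square of the mesh `R`. -/
def SquareInMesh {k : ℕ} (R : Set (Fin (k + 1) × Fin (k + 1))) (a b : ℤ) : Prop :=
  ∃ q ∈ R, (q.1.val : ℤ) = a ∧ (q.2.val : ℤ) = b

/-- `((i,j), ε, h)` is an enclosed diagonal of the mesh pattern `(π, R)`. -/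
def IsEnclosedDiagonal {k : ℕ} (π : Equiv.Perm (Fin k)) (R : Set (Fin (k + 1) × Fin (k + 1)))
    (i j ε : ℤ) (h : ℕ) : Prop :=
  (ε = 1 ∨ ε = -1) ∧ 1 ≤ h ∧
  (∀ x : ℕ, 1 ≤ x → x < h → HasPoint π (i + (x : ℤ)) (j + (x : ℤ) * ε)) ∧
  ¬ HasPoint π i j ∧ ¬ HasPoint π (i + (h : ℤ)) (j + (h : ℤ) * ε) ∧
  (∀ x : ℕ, x < h → SquareInMesh R (i + (x : ℤ)) (j + (x : ℤ) * ε))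

def HasEnclosedDiagonal {k : ℕ} (π : Equiv.Perm (Fin k))
    (R : Set (Fin (k + 1) × Fin (k + 1))) : Prop :=
  ∃ i j ε h, IsEnclosedDiagonal π R i j ε h

/-- The mesh `R` is superfluous for `π`: the mesh pattern `(π, R)` is coincident with
the classical pattern `π` (contained in exactly the same permutations, equivalently
avoided by exactly the same permutations). -/
def Superfluous {k : ℕ} (π : Equiv.Perm (Fin k)) (R : Set (Fin (k + 1) × Fin (k + 1))) : Prop :=
  ∀ (n : ℕ) (σ : Equiv.Perm (Fin n)), MeshContains π R σ ↔ PatternContains π σ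

/-- The number of superfluous meshes for `π`. -/
noncomputable def supMesh {k : ℕ} (π : Equiv.Perm (Fin k)) : ℕ :=
  Nat.card {R : Set (Fin (k + 1) × Fin (k + 1)) // Superfluous π R}

/-- The type of all permutations (of all sizes). -/
def Perms : Type := Σ n : ℕ, Equiv.Perm (Fin n)

def PContains (p q : Perms) : Prop := PatternContains p.2 q.2

/-- Permutations avoiding every pattern in `P`. -/
def Av (P : Set Perms) : Set Perms := {σ | ∀ p ∈ P, ¬ PContains p σ}

/-- Permutations containing some pattern in `P`. -/
def ContSet (P : Set Perms) : Set Perms := {σ | ∃ p ∈ P, PContains p σ}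

/-- Permutations (of all sizes) avoiding the mesh pattern `(π, R)`. -/
def AvMesh {k : ℕ} (π : Equiv.Perm (Fin k)) (R : Set (Fin (k + 1) × Fin (k + 1))) :
    Set Perms :=
  {σ | ¬ MeshContains π R σ.2}

def permOnNat {k : ℕ} (π : Equiv.Perm (Fin k)) (a : ℕ) : ℕ :=
  if h : a < k then (π ⟨a, h⟩).val else a

def liftVal (j w : ℕ) : ℕ := if w < j then w else w + 1

/-- (0-indexed) values of the permutation obtained from `π` by inserting the value
`j + 1/2` between positions `i` and `i+1` (1-indexed) and rescaling. -/
def insertVal {k : ℕ} (π : Equiv.Perm (Fin k)) (i j p : ℕ) : ℕ :=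
  if p < i then liftVal j (permOnNat π p)
  else if p = i then j
  else liftVal j (permOnNat π (p - 1))

/-- The boxed mesh `[1, k-1] × [1, k-1]`. -/
def boxMesh (k : ℕ) : Set (Fin (k + 1) × Fin (k + 1)) :=
  {q | 1 ≤ q.1.val ∧ q.1.val ≤ k - 1 ∧ 1 ≤ q.2.val ∧ q.2.val ≤ k - 1}

/-- The set of squares of the diagonal `((i,j), ε, h)`. -/
def DiagSquares {k : ℕ} (i j ε : ℤ) (h : ℕ) : Set (Fin (k + 1) × Fin (k + 1)) :=
  {q | ∃ x : ℕ, x < h ∧ (q.1.val : ℤ) = i + (x : ℤ) ∧ (q.2.val : ℤ) = j + (x : ℤ) * ε}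

/-!
A mesh `R` is superfluous for `123` exactly when it lies in the band `|i - j| ≤ 1`, shades at
most one of the two off-diagonal squares at each point of the pattern, and leaves some diagonal
square unshaded; there are `3 ^ 3 * 15 = 405` such meshes.

Each forbidden configuration is witnessed by `123` with one point inserted into one of its
squares: every occurrence of `123` in that permutation of length 4 has a point in a shaded
region. Conversely, give every point `c` of the pattern a direction such that each shaded square
lies on that side of one of its corners. An occurrence minimising the sum of the corresponding
signed coordinates then leaves every shaded region empty, since a point of `σ` in such a region
could replace the corner and lower the sum.
-/

open Equiv Finset Function

section General

variable {k n : ℕ}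

def IsOccurrence (π : Perm (Fin k)) (σ : Perm (Fin n)) (f : Fin k → Fin n) : Prop :=
  StrictMono f ∧ ∀ a b, σ (f a) < σ (f b) ↔ π a < π b

def InRegion (π : Perm (Fin k)) (σ : Perm (Fin n)) (f : Fin k → Fin n)
    (p : Fin (k + 1) × Fin (k + 1)) (z : Fin n) : Prop :=
  (∀ c : Fin k, c.val < p.1.val → f c < z) ∧ (∀ c : Fin k, p.1.val ≤ c.val → z < f c) ∧
    (∀ c : Fin k, (π c).val < p.2.val → σ (f c) < σ z) ∧
    (∀ c : Fin k, p.2.val ≤ (π c).val → σ z < σ (f c))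

def IsCornerPoint (π : Perm (Fin k)) (c : Fin k) (p : Fin (k + 1) × Fin (k + 1)) : Prop :=
  (p.1.val = c.val ∨ p.1.val = c.val + 1) ∧ (p.2.val = (π c).val ∨ p.2.val = (π c).val + 1)

instance (π : Perm (Fin k)) (σ : Perm (Fin n)) : DecidablePred (IsOccurrence π σ) := fun _ => by
  unfold IsOccurrence StrictMono; infer_instance

instance (π : Perm (Fin k)) (σ : Perm (Fin n)) (f : Fin k → Fin n) (p : Fin (k + 1) × Fin (k + 1))
    (z : Fin n) : Decidable (InRegion π σ f p z) := by
  unfold InRegion; infer_instance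

instance (π : Perm (Fin k)) (c : Fin k) : DecidablePred (IsCornerPoint π c) := fun _ => by
  unfold IsCornerPoint; infer_instance

theorem meshContains_iff {π : Perm (Fin k)} {R : Set (Fin (k + 1) × Fin (k + 1))}
    {σ : Perm (Fin n)} :
    MeshContains π R σ ↔ ∃ f, IsOccurrence π σ f ∧ ∀ p ∈ R, ¬ ∃ z, InRegion π σ f p z := by
  simp only [MeshContains, IsOccurrence, InRegion, and_assoc]

theorem update_apply_lt_update_apply_iff {ι β γ : Type*} [DecidableEq ι] [LinearOrder β]
    [LinearOrder γ] {u : ι → β} {v : ι → γ} (hu : Injective u) (huv : ∀ a b, v a < v b ↔ u a < u b)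
    {c : ι} {y : γ} (hlt : ∀ a, u a < u c → v a < y) (hgt : ∀ a, u c < u a → y < v a)
    (a b : ι) : update v c y a < update v c y b ↔ u a < u b := by
  have hcmp : ∀ a, a ≠ c → (v a < y ↔ u a < u c) ∧ (y < v a ↔ u c < u a) := by
    intro a ha
    rcases lt_trichotomy (u a) (u c) with h | h | h
    · have := hlt a h; exact ⟨iff_of_true this h, iff_of_false (lt_asymm this) (lt_asymm h)⟩
    · exact absurd (hu h) ha
    · have := hgt a h; exact ⟨iff_of_false (lt_asymm this) (lt_asymm h), iff_of_true this h⟩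
  by_cases ha : a = c <;> by_cases hb : b = c
  · subst ha hb; simp
  · subst ha; rw [update_self, update_of_ne hb]; exact (hcmp b hb).2
  · subst hb; rw [update_self, update_of_ne ha]; exact (hcmp a ha).1
  · rw [update_of_ne ha, update_of_ne hb]; exact huv a b

theorem IsOccurrence.update {π : Perm (Fin k)} {σ : Perm (Fin n)} {f : Fin k → Fin n}
    (hf : IsOccurrence π σ f) {c : Fin k} {p : Fin (k + 1) × Fin (k + 1)} {z : Fin n}
    (hc : IsCornerPoint π c p) (hz : InRegion π σ f p z) : IsOccurrence π σ (update f c z) := by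
  obtain ⟨hx, hy⟩ := hc
  obtain ⟨h1, h2, h3, h4⟩ := hz
  refine ⟨fun a b hab => (update_apply_lt_update_apply_iff (u := id) injective_id
    (fun _ _ => hf.1.lt_iff_lt) (fun a ha => h1 a ?_) (fun a ha => h2 a ?_) a b).2 hab,
    fun a b => ?_⟩
  · rw [id, id, Fin.lt_def] at ha; omega
  · rw [id, id, Fin.lt_def] at ha; omega
  rw [apply_update (fun _ => ⇑σ), apply_update (fun _ => ⇑σ)]
  refine update_apply_lt_update_apply_iff π.injective hf.2 (fun a ha => h3 a ?_)
    (fun a ha => h4 a ?_) a b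
  · rw [Fin.lt_def] at ha; omega
  · rw [Fin.lt_def] at ha; omega

inductive Direction
  | left | right | down | up

namespace Direction

/-- Moving a point of an occurrence in direction `d` strictly decreases `d.potential σ`. -/
def potential (σ : Perm (Fin n)) : Direction → Fin n → ℤ
  | left, z => z
  | right, z => -z
  | down, z => σ z
  | up, z => -(σ z : ℤ)

/-- The square `p` lies on side `d` of the point `(c, π c)`. -/
def PointsInto (π : Perm (Fin k)) (c : Fin k) : Direction → Fin (k + 1) × Fin (k + 1) → Prop
  | left, p => p.1.val = c.val
  | right, p => p.1.val = c.val + 1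
  | down, p => p.2.val = (π c).val
  | up, p => p.2.val = (π c).val + 1

instance (π : Perm (Fin k)) (c : Fin k) (d : Direction) (p : Fin (k + 1) × Fin (k + 1)) :
    Decidable (d.PointsInto π c p) := by
  cases d <;> unfold PointsInto <;> infer_instance

theorem potential_lt {π : Perm (Fin k)} {σ : Perm (Fin n)} {f : Fin k → Fin n}
    {p : Fin (k + 1) × Fin (k + 1)} {z : Fin n} {c : Fin k} {d : Direction}
    (hz : InRegion π σ f p z) (hd : d.PointsInto π c p) :
    d.potential σ z < d.potential σ (f c) := by
  obtain ⟨h1, h2, h3, h4⟩ := hz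
  cases d <;> simp only [PointsInto] at hd <;> simp only [potential, neg_lt_neg_iff, Nat.cast_lt,
    ← Fin.lt_def]
  exacts [h2 c hd.le, h1 c (by omega), h4 c hd.le, h3 c (by omega)]

end Direction

theorem superfluous_of_pointsInto {π : Perm (Fin k)} {R : Set (Fin (k + 1) × Fin (k + 1))}
    (d : Fin k → Direction)
    (hR : ∀ p ∈ R, ∃ c, IsCornerPoint π c p ∧ (d c).PointsInto π c p) : Superfluous π R := by
  intro n σ
  refine ⟨fun ⟨f, hf, hπ, _⟩ => ⟨f, hf, hπ⟩, fun ⟨f₀, hf₀⟩ => ?_⟩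
  let Φ : (Fin k → Fin n) → ℤ := fun f => ∑ c, (d c).potential σ (f c)
  obtain ⟨f, hf, hmin⟩ := (univ.filter (IsOccurrence π σ)).exists_min_image Φ
    ⟨f₀, mem_filter.2 ⟨mem_univ _, hf₀⟩⟩
  refine meshContains_iff.2 ⟨f, (mem_filter.1 hf).2, fun p hp ⟨z, hz⟩ => ?_⟩
  obtain ⟨c, hc, hd⟩ := hR p hp
  have hΦ : Φ (update f c z) = Φ f + ((d c).potential σ z - (d c).potential σ (f c)) := by
    simp only [Φ, apply_update (fun c => (d c).potential σ)]
    rw [sum_update_of_mem (mem_univ c), sdiff_singleton_eq_erase,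
      ← add_sum_erase univ _ (mem_univ c)]
    ring
  have := hmin _ (mem_filter.2 ⟨mem_univ _, (mem_filter.1 hf).2.update hc hz⟩)
  have := Direction.potential_lt hz hd
  linarith

def Obstructs (π : Perm (Fin k)) (σ : Perm (Fin n)) (S : Finset (Fin (k + 1) × Fin (k + 1))) :
    Prop :=
  (∃ f, IsOccurrence π σ f) ∧ ∀ f, IsOccurrence π σ f → ∃ p ∈ S, ∃ z, InRegion π σ f p z

instance (π : Perm (Fin k)) (σ : Perm (Fin n)) (S : Finset (Fin (k + 1) × Fin (k + 1))) :
    Decidable (Obstructs π σ S) := by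
  unfold Obstructs; infer_instance

theorem Obstructs.not_superfluous {π : Perm (Fin k)} {σ : Perm (Fin n)}
    {S : Finset (Fin (k + 1) × Fin (k + 1))} {R : Set (Fin (k + 1) × Fin (k + 1))}
    (h : Obstructs π σ S) (hS : ↑S ⊆ R) : ¬ Superfluous π R := fun hR => by
  obtain ⟨f, hf, hempty⟩ := meshContains_iff.1 ((hR n σ).2 h.1)
  obtain ⟨p, hp, hz⟩ := h.2 f hf
  exact hempty p (hS hp) hz

/-- The graph of `π` with one extra point inside the square `p`. -/
def insertPoint (π : Perm (Fin k)) (p : Fin (k + 1) × Fin (k + 1)) : Fin (k + 1) → Fin (k + 1) :=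
  Fin.insertNth p.1 p.2 fun a => p.2.succAbove (π a)

theorem insertPoint_bijective (π : Perm (Fin k)) (p : Fin (k + 1) × Fin (k + 1)) :
    Bijective (insertPoint π p) := by
  refine Finite.injective_iff_bijective.1 fun x y hxy => ?_
  rcases Fin.eq_self_or_eq_succAbove p.1 x with rfl | ⟨a, rfl⟩ <;>
    rcases Fin.eq_self_or_eq_succAbove p.1 y with rfl | ⟨b, rfl⟩ <;>
    simp_all [insertPoint, Fin.succAbove_ne, (Fin.succAbove_ne _ _).symm]

noncomputable def insertPointPerm (π : Perm (Fin k)) (p : Fin (k + 1) × Fin (k + 1)) :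
    Perm (Fin (k + 1)) :=
  ofBijective (insertPoint π p) (insertPoint_bijective π p)

end General

namespace Identity3

def band : Finset (Fin 4 × Fin 4) :=
  univ.filter fun p => p.1.val ≤ p.2.val + 1 ∧ p.2.val ≤ p.1.val + 1

def squareAbove (c : Fin 3) : Fin 4 × Fin 4 := (c.castSucc, c.succ)

def squareBelow (c : Fin 3) : Fin 4 × Fin 4 := (c.succ, c.castSucc)

def diagonal : Finset (Fin 4 × Fin 4) := univ.image fun m => (m, m)

def admissible : Finset (Finset (Fin 4 × Fin 4)) :=
  band.powerset.filter fun s =>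
    (∀ c, ¬(squareAbove c ∈ s ∧ squareBelow c ∈ s)) ∧ ¬ diagonal ⊆ s

theorem card_admissible : admissible.card = 405 := by decide +kernel

theorem obstructs_singleton : ∀ p ∉ band, Obstructs 1 (insertPointPerm 1 p) {p} := by
  decide

theorem obstructs_pair :
    ∀ c, Obstructs 1 (insertPointPerm 1 (squareBelow c)) {squareAbove c, squareBelow c} := by
  decide

theorem obstructs_diagonal : Obstructs 1 (insertPointPerm (1 : Perm (Fin 3)) (0, 0)) diagonal := by
  decide

/-- Given an unshaded diagonal square `(m, m)`, the points left of it are pushed towards their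
lower-left diagonal square and the others towards their upper-right one; `t c` records whether
the point `c` must also clear the square above it rather than the one below it. -/
def direction (m : Fin 4) (t : Fin 3 → Bool) (c : Fin 3) : Direction :=
  if c.castSucc < m then (if t c then .left else .down) else (if t c then .up else .right)

def maximalMesh (m : Fin 4) (t : Fin 3 → Bool) : Finset (Fin 4 × Fin 4) :=
  band \ insert (m, m) (univ.image fun c => if t c then squareBelow c else squareAbove c)

theorem exists_pointsInto_direction : ∀ (m : Fin 4) (t : Fin 3 → Bool), ∀ p ∈ maximalMesh m t,
    ∃ c, IsCornerPoint 1 c p ∧ (direction m t c).PointsInto 1 c p := by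
  decide

theorem subset_maximalMesh {s : Finset (Fin 4 × Fin 4)} (hs : s ∈ admissible) :
    ∃ m, s ⊆ maximalMesh m fun c => decide (squareAbove c ∈ s) := by
  simp only [admissible, mem_filter, mem_powerset, diagonal, image_subset_iff, mem_univ,
    forall_const, not_forall, not_and] at hs
  obtain ⟨hband, hpair, m, hm⟩ := hs
  refine ⟨m, fun p hp => mem_sdiff.2 ⟨hband hp, ?_⟩⟩
  simp only [mem_insert, mem_image, mem_univ, true_and, not_or, not_exists]
  refine ⟨ne_of_mem_of_not_mem hp hm, fun c => ?_⟩
  split_ifs with h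
  · exact (ne_of_mem_of_not_mem hp (hpair c (of_decide_eq_true h))).symm
  · exact (ne_of_mem_of_not_mem hp (by simpa using h)).symm

theorem superfluous_of_mem_admissible {s : Finset (Fin 4 × Fin 4)} (hs : s ∈ admissible) :
    Superfluous (1 : Perm (Fin 3)) ↑s := by
  obtain ⟨m, hm⟩ := subset_maximalMesh hs
  exact superfluous_of_pointsInto (direction m _) fun p hp =>
    exists_pointsInto_direction m _ p (hm hp)

theorem superfluous_iff (s : Finset (Fin 4 × Fin 4)) :
    Superfluous (1 : Perm (Fin 3)) ↑s ↔ s ∈ admissible := by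
  refine ⟨fun h => ?_, superfluous_of_mem_admissible⟩
  have hband : s ⊆ band := fun p hp => by
    by_contra hp'
    exact (obstructs_singleton p hp').not_superfluous (by simpa using hp) h
  have hpair : ∀ c, ¬(squareAbove c ∈ s ∧ squareBelow c ∈ s) := fun c hc =>
    (obstructs_pair c).not_superfluous (by simp [Set.insert_subset_iff, hc.1, hc.2]) h
  have hdiag : ¬ diagonal ⊆ s := fun hd =>
    obstructs_diagonal.not_superfluous (by exact_mod_cast hd) h
  simp only [admissible, mem_filter, mem_powerset, not_and]
  exact ⟨hband, fun c h₁ h₂ => hpair c ⟨h₁, h₂⟩, hdiag⟩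

end Identity3

/-- The identity permutation `123 ∈ S_3` has exactly 405 superfluous meshes. -/
theorem supMesh_123 : supMesh (1 : Equiv.Perm (Fin 3)) = 405 := by
  calc supMesh (1 : Perm (Fin 3))
      = Nat.card {s : Finset (Fin 4 × Fin 4) // Superfluous (1 : Perm (Fin 3)) ↑s} :=
        Nat.card_congr (Fintype.finsetEquivSet.subtypeEquiv fun _ => Iff.rfl).symm
    _ = Nat.card Identity3.admissible :=
        Nat.card_congr (Equiv.subtypeEquivRight Identity3.superfluous_iff)
    _ = 405 := by rw [Nat.card_eq_finsetCard, Identity3.card_admissible]
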